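/- arXiv:1206.0977 — 3 statements merged into one kernel-verified Lean document; each statement's English description precedes it below -/
import Mathlib

section
/- Let R be an integral domain in which 2 is a unit. Every upper triangular matrix g in GL_{n+1}(R) with g^2 = 1 is conjugate, via a unipotent upper triangular matrix with entries in R, to a diagonal matrix. -/
/-- Let `R` be an integral domain in which `2` is a unit. Every upper triangular
matrix `g ∈ GL_{n+1}(R)` with `g^2 = 1` is conjugate, via a unipotent upper triangular matrix
over `R`, to a diagonal matrix. -/
theorem stmt1 {R : Type*} [CommRing R] [IsDomain R] (h2 : IsUnit (2 : R)) (n : ℕ)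
    (g : Matrix (Fin (n + 1)) (Fin (n + 1)) R) (hupper : g.BlockTriangular id)
    (hGL : IsUnit g) (hinv : g * g = 1) :
    ∃ u v : Matrix (Fin (n + 1)) (Fin (n + 1)) R,
      u * v = 1 ∧ v * u = 1 ∧ u.BlockTriangular id ∧ (∀ i, u i i = 1) ∧
      (v * g * u).IsDiag := by
  obtain ⟨t, ht⟩ := h2.exists_right_inv
  set D : Matrix (Fin (n + 1)) (Fin (n + 1)) R := Matrix.diagonal (fun i => g i i) with hD
  -- diagonal entries square to 1
  have hdsq : ∀ i, g i i * g i i = 1 := by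
    intro i
    have h1 : (g * g) i i = 1 := by rw [hinv]; simp
    rw [Matrix.mul_apply] at h1
    rw [Finset.sum_eq_single i] at h1
    · exact h1
    · intro k _ hk
      rcases lt_or_gt_of_ne hk with h | h
      · rw [hupper (show id k < id i from h), zero_mul]
      · rw [hupper (show id i < id k from h), mul_zero]
    · intro h; exact absurd (Finset.mem_univ i) h
  have hDD : D * D = 1 := by
    rw [hD, Matrix.diagonal_mul_diagonal]
    rw [show (fun i => g i i * g i i) = fun _ => (1 : R) from funext hdsq]
    exact Matrix.diagonal_one
  set u : Matrix (Fin (n + 1)) (Fin (n + 1)) R := t • (g * D + 1) with hu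
  have hgD : (g * D).BlockTriangular id :=
    hupper.mul (Matrix.blockTriangular_diagonal _)
  have hut : u.BlockTriangular id := by
    rw [hu]
    intro i j h
    simp [hu, Matrix.smul_apply, (hgD.add Matrix.blockTriangular_one) h]
  have hgDii : ∀ i, (g * D) i i = 1 := by
    intro i
    rw [hD, Matrix.mul_diagonal]
    exact hdsq i
  have huii : ∀ i, u i i = 1 := by
    intro i
    rw [hu]
    simp only [Matrix.smul_apply, Matrix.add_apply, Matrix.one_apply_eq, hgDii i, smul_eq_mul]
    rw [mul_comm] at ht
    rw [show (1 : R) + 1 = 2 by ring, ht]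
  -- g * u = u * D
  have hgu : g * u = u * D := by
    rw [hu, Matrix.mul_smul, Matrix.smul_mul, mul_add, add_mul, ← mul_assoc, hinv,
      one_mul, mul_assoc, hDD, mul_one, add_comm D g]
  -- u is invertible
  have hdet : u.det = 1 := by
    rw [Matrix.det_of_upperTriangular hut]
    simp [huii]
  have hdu : IsUnit u.det := by rw [hdet]; exact isUnit_one
  refine ⟨u, u⁻¹, Matrix.mul_nonsing_inv u hdu, Matrix.nonsing_inv_mul u hdu, hut, huii, ?_⟩
  rw [mul_assoc, hgu, ← mul_assoc, Matrix.nonsing_inv_mul u hdu, one_mul]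
  exact Matrix.isDiag_diagonal _
end

section
/- Let K be a field with additive discrete valuation ν, O the valuation ring with 2 ∈ O^×, V a K-vector space, and σ a K-linear involution of V with eigenspaces V^+ and V^−. An (additive) norm α on V is σ-invariant (α(σf) = α(f) for all f) if and only if α splits over the decomposition V = V^+ ⊕ V^−, i.e., α(f₊ + f₋) = min{α(f₊), α(f₋)} for all f₊ ∈ V^+, f₋ ∈ V^−. -/
/-- Let `K` be a field with additive discrete valuation `ν`, whose valuation
ring contains `2` as a unit (`ν 2 = 0`, and `2 ≠ 0`), `V` a `K`-vector space, `σ` a `K`-linear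
involution of `V` with eigenspaces `V⁺ = ker (σ - id)` and `V⁻ = ker (σ + id)`. An additive
norm `α` on `V` is `σ`-invariant iff it splits over `V = V⁺ ⊕ V⁻`, i.e.
`α (f₊ + f₋) = min (α f₊) (α f₋)` for all `f₊ ∈ V⁺`, `f₋ ∈ V⁻`. -/
theorem stmt7 {K V : Type*} [Field K] [AddCommGroup V] [Module K V]
    (ν : K → WithTop ℝ)
    (hν0 : ∀ k : K, ν k = ⊤ ↔ k = 0)
    (hνmul : ∀ k k' : K, ν (k * k') = ν k + ν k')
    (hν1 : ν 1 = 0)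
    (h2ν : ν 2 = 0) (h2 : (2 : K) ≠ 0)
    (α : V → WithTop ℝ)
    (hsmul : ∀ (k : K) (f : V), α (k • f) = ν k + α f)
    (hadd : ∀ f f' : V, min (α f) (α f') ≤ α (f + f'))
    (hzero : ∀ f : V, α f = ⊤ ↔ f = 0)
    (σ : V →ₗ[K] V) (hσ : σ.comp σ = LinearMap.id) :
    (∀ f : V, α (σ f) = α f) ↔
      ∀ fp ∈ LinearMap.ker (σ - LinearMap.id), ∀ fm ∈ LinearMap.ker (σ + LinearMap.id),
        α (fp + fm) = min (α fp) (α fm) := by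
  have hν2inv : ν (2⁻¹ : K) = 0 := by
    have h := hνmul 2 2⁻¹
    rw [mul_inv_cancel₀ h2, hν1, h2ν, zero_add] at h
    exact h.symm
  have hνneg1 : ν (-1 : K) = 0 := by
    have h := hνmul (-1) (-1)
    rw [neg_mul_neg, one_mul, hν1] at h
    rcases eq_or_ne (ν (-1 : K)) ⊤ with ht | ht
    · exact absurd ((hν0 _).mp ht) (neg_ne_zero.mpr one_ne_zero)
    · lift ν (-1 : K) to ℝ using ht with r hr
      have hrr : r + r = 0 := by exact_mod_cast h.symm
      have : r = 0 := by linarith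
      exact_mod_cast this
  have hneg : ∀ f : V, α (-f) = α f := by
    intro f
    have h := hsmul (-1) f
    rwa [neg_one_smul, hνneg1, zero_add] at h
  have hσσ : ∀ v : V, σ (σ v) = v := by
    intro v
    have := LinearMap.ext_iff.mp hσ v
    simpa using this
  constructor
  · intro hinv fp hfp fm hfm
    rw [LinearMap.mem_ker, LinearMap.sub_apply, LinearMap.id_apply, sub_eq_zero] at hfp
    rw [LinearMap.mem_ker, LinearMap.add_apply, LinearMap.id_apply,
      add_eq_zero_iff_eq_neg] at hfm
    have hσsum : σ (fp + fm) = fp - fm := by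
      rw [map_add, hfp, hfm]; abel
    have hαsub : α (fp - fm) = α (fp + fm) := by rw [← hσsum, hinv]
    refine le_antisymm ?_ (hadd _ _)
    have h2p : α (fp + fm) ≤ α fp := by
      have h1 := hadd (fp + fm) (fp - fm)
      have heq : (fp + fm) + (fp - fm) = (2 : K) • fp := by
        rw [two_smul]; abel
      rw [heq, hsmul, h2ν, zero_add, hαsub, min_self] at h1
      exact h1
    have h2m : α (fp + fm) ≤ α fm := by
      have h1 := hadd (fp - fm) (-(fp + fm))
      have heq : (fp - fm) + (-(fp + fm)) = (2 : K) • (-fm) := by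
        rw [two_smul]; abel
      rw [heq, hsmul, h2ν, zero_add, hneg, hαsub, hneg, min_self] at h1
      exact h1
    exact le_min h2p h2m
  · intro hsplit f
    set fp := (2⁻¹ : K) • (f + σ f) with hfp_def
    set fm := (2⁻¹ : K) • (f - σ f) with hfm_def
    have hmem_p : fp ∈ LinearMap.ker (σ - LinearMap.id) := by
      rw [LinearMap.mem_ker, LinearMap.sub_apply, LinearMap.id_apply, sub_eq_zero,
        hfp_def, map_smul, map_add, hσσ]
      rw [add_comm]
    have hσfm : σ fm = -fm := by
      rw [hfm_def, map_smul, map_sub, hσσ, ← smul_neg, neg_sub]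
    have hmem_m : fm ∈ LinearMap.ker (σ + LinearMap.id) := by
      rw [LinearMap.mem_ker, LinearMap.add_apply, LinearMap.id_apply, hσfm,
        neg_add_cancel]
    have hmem_m' : -fm ∈ LinearMap.ker (σ + LinearMap.id) := by
      rw [LinearMap.mem_ker, LinearMap.add_apply, LinearMap.id_apply, map_neg, hσfm,
        neg_neg, add_neg_cancel]
    have hsum : fp + fm = f := by
      rw [hfp_def, hfm_def, ← smul_add]
      have : (f + σ f) + (f - σ f) = (2 : K) • f := by rw [two_smul]; abel
      rw [this, smul_smul, inv_mul_cancel₀ h2, one_smul]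
    have hdiff : fp + (-fm) = σ f := by
      rw [hfp_def, hfm_def, ← smul_neg, ← smul_add, neg_sub]
      have : (f + σ f) + (σ f - f) = (2 : K) • σ f := by rw [two_smul]; abel
      rw [this, smul_smul, inv_mul_cancel₀ h2, one_smul]
    calc α (σ f) = α (fp + (-fm)) := by rw [hdiff]
      _ = min (α fp) (α (-fm)) := hsplit fp hmem_p (-fm) hmem_m'
      _ = min (α fp) (α fm) := by rw [hneg]
      _ = α (fp + fm) := (hsplit fp hmem_p fm hmem_m).symm
      _ = α f := by rw [hsum]
end

section
/- Let α_0, …, α_{n−1} be nonnegative reals with sum 1 and define c_i = Σ_{j=0}^{n−1} α_{(i+j) mod n}·(i+j)/n for i ∈ Z. Then the half-open intervals [c_i, c_i + α_{i mod n}) over those i ∈ Z with α_{i mod n} > 0 disjointly cover ℝ. -/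
/-- With `α` nonnegative summing to `1` and `c i = Σ_{j<n} α_{(i+j) mod n}·(i+j)/n`,
the half-open intervals `[c i, c i + α_{i mod n})` over those `i ∈ ℤ` with `α_{i mod n} > 0`
disjointly cover `ℝ`: every real lies in exactly one of them. -/
theorem stmt10 (n : ℕ) [NeZero n] (α : ZMod n → ℝ)
    (hnonneg : ∀ j, 0 ≤ α j) (hsum : ∑ j : ZMod n, α j = 1)
    (c : ℤ → ℝ)
    (hc : ∀ i : ℤ, c i = ∑ j ∈ Finset.range n,
      α ((i + (j : ℤ)) : ZMod n) * (((i : ℝ) + (j : ℝ)) / n)) :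
    ∀ r : ℝ, ∃! i : {i : ℤ // 0 < α (i : ZMod n)},
      r ∈ Set.Ico (c i.1) (c i.1 + α ((i.1 : ZMod n))) := by
  have hn0 : 0 < n := Nat.pos_of_ne_zero (NeZero.ne n)
  have hnR : (0:ℝ) < (n:ℝ) := by exact_mod_cast hn0
  -- step lemma: c (i+1) = c i + α i
  have hstep : ∀ i : ℤ, c (i + 1) = c i + α (i : ZMod n) := by
    intro i
    set g : ℕ → ℝ := fun j => α ((i : ZMod n) + ((j:ℤ) : ZMod n)) * (((i:ℝ) + (j:ℝ)) / n)
      with hg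
    have hci : c i = ∑ j ∈ Finset.range n, g j := hc i
    have h1 : c (i + 1) = ∑ j ∈ Finset.range n, g (j + 1) := by
      rw [hc]
      refine Finset.sum_congr rfl fun j _ => ?_
      simp only [hg]
      congr 2
      · push_cast; ring
      · push_cast; ring
    have h2 : ∑ j ∈ Finset.range n, g (j + 1)
        = (∑ j ∈ Finset.range n, g j) + g n - g 0 := by
      have := Finset.sum_range_succ' g n
      have h3 := Finset.sum_range_succ g n
      rw [h3] at this
      linarith [this]
    have hcast : (((n:ℕ):ℤ) : ZMod n) = 0 := by push_cast; simp
    have hgn : g n = α (i : ZMod n) * (((i:ℝ) + (n:ℝ)) / n) := by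
      simp only [hg, hcast, add_zero]
    have hg0 : g 0 = α (i : ZMod n) * ((i:ℝ) / n) := by
      simp [hg]
    rw [h1, h2, hgn, hg0, ← hci]
    field_simp
    ring
  have hmono : Monotone c := by
    apply monotone_int_of_le_succ
    intro i
    rw [hstep i]
    linarith [hnonneg (i : ZMod n)]
  -- sum of α over a window of length n is 1
  have hwin : ∀ i : ℤ, ∑ j ∈ Finset.range n, α ((i + (j:ℤ)) : ZMod n) = 1 := by
    intro i
    rw [← hsum]
    refine Finset.sum_nbij' (fun j => ((i : ZMod n) + ((j:ℤ) : ZMod n)))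
      (fun z => (z - (i : ZMod n)).val) ?_ ?_ ?_ ?_ ?_
    · intro a _; exact Finset.mem_univ _
    · intro z _; exact Finset.mem_range.2 (ZMod.val_lt _)
    · intro a ha
      have ha' : a < n := Finset.mem_range.1 ha
      show ((i : ZMod n) + ((a:ℤ) : ZMod n) - (i : ZMod n)).val = a
      have h : (i : ZMod n) + ((a:ℤ) : ZMod n) - (i : ZMod n) = (a : ZMod n) := by
        push_cast; ring
      rw [h, ZMod.val_natCast_of_lt ha']
    · intro z _
      show (i : ZMod n) + ((((z - (i:ZMod n)).val : ℕ):ℤ) : ZMod n) = z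
      push_cast
      rw [ZMod.natCast_val, ZMod.cast_id]
      ring
    · intro a _; rfl
  -- shift lemma: c (i + n) = c i + 1
  have hshift : ∀ i : ℤ, c (i + n) = c i + 1 := by
    intro i
    have key : ∀ k : ℕ, c (i + k) = c i + ∑ j ∈ Finset.range k, α ((i + (j:ℤ)) : ZMod n) := by
      intro k
      induction k with
      | zero => simp
      | succ k ih =>
        have : (i + (k+1 : ℕ) : ℤ) = (i + k) + 1 := by push_cast; ring
        rw [this, hstep, ih, Finset.sum_range_succ]
        push_cast
        ring
    rw [key n, hwin]
  -- c at multiples of n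
  have hmul : ∀ m : ℤ, c (m * n) = c 0 + m := by
    intro m
    induction m using Int.induction_on with
    | zero => simp
    | succ k ih =>
      have : ((k:ℤ) + 1) * n = (k * n) + n := by ring
      rw [this, hshift, ih]
      push_cast; ring
    | pred k ih =>
      have h := hshift ((-(k:ℤ) - 1) * n)
      have he : (-(k:ℤ) - 1) * n + n = (-(k:ℤ)) * n := by ring
      rw [he, ih] at h
      push_cast at h ⊢
      linarith
  intro r
  -- the set of i with c i ≤ r is nonempty and bounded above
  classical
  have hlow : ∃ i : ℤ, c i ≤ r := by
    refine ⟨⌊r - c 0⌋ * n, ?_⟩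
    rw [hmul]
    have := Int.floor_le (r - c 0)
    linarith
  have hupbd : ∃ b : ℤ, ∀ z : ℤ, c z ≤ r → z ≤ b := by
    refine ⟨(⌊r - c 0⌋ + 1) * n, fun z hz => ?_⟩
    by_contra h
    push_neg at h
    have h1 : c ((⌊r - c 0⌋ + 1) * n) ≤ c z := hmono h.le
    rw [hmul] at h1
    have := Int.lt_floor_add_one (r - c 0)
    push_cast at h1
    linarith
  obtain ⟨i₀, hi₀, hmax⟩ := Int.exists_greatest_of_bdd (P := fun z => c z ≤ r) hupbd hlow
  have hr1 : r < c (i₀ + 1) := by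
    by_contra h
    push_neg at h
    have := hmax (i₀ + 1) h
    omega
  have hpos : 0 < α (i₀ : ZMod n) := by
    rcases lt_or_eq_of_le (hnonneg (i₀ : ZMod n)) with h | h
    · exact h
    · exfalso
      rw [hstep i₀, ← h] at hr1
      simp at hr1
      linarith
  refine ⟨⟨i₀, hpos⟩, ⟨hi₀, by rw [← hstep]; exact hr1⟩, ?_⟩
  rintro ⟨j, hj⟩ ⟨hj1, hj2⟩
  rw [← hstep] at hj2
  have hji : j ≤ i₀ := hmax j hj1
  rcases lt_or_eq_of_le hji with h | h
  · exfalso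
    have : c (j + 1) ≤ c i₀ := hmono (by omega)
    linarith
  · exact Subtype.ext h
end
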